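/- Let V be a finitely generated ℝ[t]-module with pⁿV = 0 for p monic irreducible, V_k = ker(pᵏ). Suppose for each k, elements w_{k,1},...,w_{k,m_k} ∈ V_k are chosen such that for every k the images of {p^{i-k} w_{i,j} : k ≤ i ≤ n, 1 ≤ j ≤ m_i} form a basis of V_k/V_{k-1} over ℝ[t]/(p). Then V is the internal direct sum of the cyclic submodules ℝ[t]·w_{i,j}. -/

import Mathlib

/-!
A relation `∑ g x • w x = 0` among the generators is pushed down level by level: if
`p ^ (ℓ x - k) ∣ g x` for every generator of level `ℓ x > k`, then multiplying the relation by
`p ^ k` turns it into a relation modulo `V_k` among the `p ^ (ℓ x - k) • w x`, whose independence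
gives one more factor of `p`. At `k = 0` every coefficient is divisible by `p ^ (ℓ x + 1)`, which
kills `w x`. Spanning is the dual induction on the exponent `k` of `p ^ k • v = 0`.
-/

open Polynomial

section LevelCombination

variable {R V ι : Type*} [CommRing R] [AddCommGroup V] [Module R V] [Fintype ι]

theorem pow_smul_eq_zero_of_le {p : R} {v : V} {a b : ℕ} (h : p ^ a • v = 0) (hab : a ≤ b) :
    p ^ b • v = 0 := by
  rw [← Nat.sub_add_cancel hab, pow_add, mul_smul, h, smul_zero]

/-- With `w x ∈ V_{ℓ x + 1}`, this is the combination `∑ f x • p ^ (ℓ x - k) • w x` of the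
candidate basis of `V_{k+1} / V_k`. -/
def levelCombination (p : R) (ℓ : ι → ℕ) (w : ι → V) (k : ℕ) (f : ι → R) : V :=
  ∑ x, if k ≤ ℓ x then f x • p ^ (ℓ x - k) • w x else 0

variable {p : R} {ℓ : ι → ℕ} {w : ι → V}

theorem levelCombination_mem_iSup_span (k : ℕ) (f : ι → R) :
    levelCombination p ℓ w k f ∈ ⨆ x, R ∙ w x :=
  Submodule.sum_mem _ fun x _ => by
    split_ifs
    · exact Submodule.mem_iSup_of_mem x <| Submodule.smul_mem _ _ <|
        Submodule.smul_mem _ _ (Submodule.mem_span_singleton_self _)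
    · exact zero_mem _

theorem pow_smul_levelCombination_eq (hw : ∀ x, p ^ (ℓ x + 1) • w x = 0) {k : ℕ} {f g : ι → R}
    (hgf : ∀ x, k ≤ ℓ x → g x = p ^ (ℓ x - k) * f x) :
    p ^ k • levelCombination p ℓ w k f = p ^ k • ∑ x, g x • w x := by
  simp only [levelCombination, Finset.smul_sum]
  refine Finset.sum_congr rfl fun x _ => ?_
  split_ifs with hx
  · rw [hgf x hx, mul_comm, mul_smul]
  · rw [smul_zero, smul_comm, pow_smul_eq_zero_of_le (hw x) (by omega), smul_zero]

theorem pow_dvd_of_sum_smul_eq_zero (hw : ∀ x, p ^ (ℓ x + 1) • w x = 0) {N : ℕ}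
    (hindep : ∀ k < N, ∀ f : ι → R,
      p ^ k • levelCombination p ℓ w k f = 0 → ∀ x, k ≤ ℓ x → p ∣ f x)
    (hℓ : ∀ x, ℓ x < N) {g : ι → R} (hg : ∑ x, g x • w x = 0) {k : ℕ} (hk : k ≤ N) :
    ∀ x, k ≤ ℓ x → p ^ (ℓ x - k + 1) ∣ g x := by
  induction hk using Nat.decreasingInduction with
  | self => exact fun x hx => absurd (hℓ x) (by omega)
  | of_succ k hk ih =>
    have hquot : ∀ x, ∃ c, k ≤ ℓ x → g x = p ^ (ℓ x - k) * c := by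
      intro x
      rcases Nat.lt_or_ge k (ℓ x) with hlt | hle
      · obtain ⟨c, hc⟩ := ih x hlt
        exact ⟨c, fun _ => by rwa [show ℓ x - k = ℓ x - (k + 1) + 1 by omega]⟩
      · exact ⟨g x, fun _ => by rw [show ℓ x - k = 0 by omega, pow_zero, one_mul]⟩
    choose f hf using hquot
    have hrel : p ^ k • levelCombination p ℓ w k f = 0 := by
      rw [pow_smul_levelCombination_eq hw hf, hg, smul_zero]
    intro x hx
    rw [hf x hx, pow_succ]
    exact mul_dvd_mul_left _ (hindep k hk f hrel x hx)

theorem smul_eq_zero_of_sum_smul_eq_zero (hw : ∀ x, p ^ (ℓ x + 1) • w x = 0) {N : ℕ}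
    (hindep : ∀ k < N, ∀ f : ι → R,
      p ^ k • levelCombination p ℓ w k f = 0 → ∀ x, k ≤ ℓ x → p ∣ f x)
    (hℓ : ∀ x, ℓ x < N) {g : ι → R} (hg : ∑ x, g x • w x = 0) (x : ι) : g x • w x = 0 := by
  obtain ⟨c, hc⟩ := pow_dvd_of_sum_smul_eq_zero hw hindep hℓ hg (Nat.zero_le N) x (Nat.zero_le _)
  rw [hc, Nat.sub_zero, mul_comm, mul_smul, hw, smul_zero]

theorem iSupIndep_span_singleton_of_forall_sum_smul_eq_zero
    (h : ∀ g : ι → R, ∑ x, g x • w x = 0 → ∀ x, g x • w x = 0) :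
    iSupIndep fun x => R ∙ w x := by
  classical
  rw [iSupIndep_iff_finsetSum_eq_zero_imp_eq_zero]
  intro s v hv hsum
  have hcoeff : ∀ x, ∃ c : R, c • w x = if x ∈ s then v x else 0 := fun x => by
    split_ifs with hx
    · exact Submodule.mem_span_singleton.mp (hv x hx)
    · exact ⟨0, zero_smul _ _⟩
  choose g hg using hcoeff
  have hg0 : ∑ x, g x • w x = 0 := by
    simp only [hg, Finset.sum_ite_mem, Finset.univ_inter, hsum]
  intro x hx
  simpa [hg, hx] using h g hg0 x

theorem mem_iSup_span_of_pow_smul_eq_zero {N : ℕ}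
    (hspan : ∀ k < N, ∀ v : V, p ^ (k + 1) • v = 0 →
      ∃ f : ι → R, p ^ k • (v - levelCombination p ℓ w k f) = 0)
    {k : ℕ} (hk : k ≤ N) {v : V} (hv : p ^ k • v = 0) : v ∈ ⨆ x, R ∙ w x := by
  induction k generalizing v with
  | zero =>
    rw [pow_zero, one_smul] at hv
    exact hv ▸ zero_mem _
  | succ k ih =>
    obtain ⟨f, hf⟩ := hspan k hk v hv
    rw [← sub_add_cancel v (levelCombination p ℓ w k f)]
    exact add_mem (ih (by omega) hf) (levelCombination_mem_iSup_span k f)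

end LevelCombination

theorem stmt9_general (V : Type*) [AddCommGroup V] [Module ℝ[X] V]
    (p : ℝ[X]) (n : ℕ)
    (hann : ∀ v : V, (p ^ n) • v = 0)
    (m : Fin n → ℕ) (w : (i : Fin n) → Fin (m i) → V)
    (hw : ∀ (i : Fin n) (j : Fin (m i)), (p ^ ((i : ℕ) + 1)) • w i j = 0)
    (hindep : ∀ (k : Fin n) (f : ((i : Fin n) × Fin (m i)) → ℝ[X]),
      (p ^ (k : ℕ)) • (∑ x : (i : Fin n) × Fin (m i),
          if (k : ℕ) ≤ (x.1 : ℕ) then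
            f x • ((p ^ ((x.1 : ℕ) - (k : ℕ))) • w x.1 x.2) else 0) = 0 →
      ∀ x : (i : Fin n) × Fin (m i), (k : ℕ) ≤ (x.1 : ℕ) → p ∣ f x)
    (hspan : ∀ (k : Fin n) (v : V), (p ^ ((k : ℕ) + 1)) • v = 0 →
      ∃ f : ((i : Fin n) × Fin (m i)) → ℝ[X],
        (p ^ (k : ℕ)) • (v - ∑ x : (i : Fin n) × Fin (m i),
          if (k : ℕ) ≤ (x.1 : ℕ) then
            f x • ((p ^ ((x.1 : ℕ) - (k : ℕ))) • w x.1 x.2) else 0) = 0) :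
    DirectSum.IsInternal (fun x : (i : Fin n) × Fin (m i) =>
      Submodule.span ℝ[X] ({w x.1 x.2} : Set V)) := by
  rw [DirectSum.isInternal_submodule_iff_iSupIndep_and_iSup_eq_top]
  set ℓ : (i : Fin n) × Fin (m i) → ℕ := fun x => x.1
  set w' : (i : Fin n) × Fin (m i) → V := fun x => w x.1 x.2
  constructor
  · exact iSupIndep_span_singleton_of_forall_sum_smul_eq_zero (w := w') fun g hg =>
      smul_eq_zero_of_sum_smul_eq_zero (ℓ := ℓ) (fun x => hw x.1 x.2)
        (fun k hk => hindep ⟨k, hk⟩) (fun x => x.1.isLt) hg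
  · exact eq_top_iff.mpr fun v _ => mem_iSup_span_of_pow_smul_eq_zero (ℓ := ℓ) (w := w')
      (fun k hk => hspan ⟨k, hk⟩) le_rfl (hann v)

/-- If for each `k` the images of `{p^{i-k} w_{i,j} : k ≤ i ≤ n}` form a basis
of `V_k/V_{k-1}` over `ℝ[t]/(p)` (expressed concretely: they are linearly
independent mod `V_{k-1}` and span `V_k` mod `V_{k-1}`), then `V` is the
internal direct sum of the cyclic submodules `ℝ[t]·w_{i,j}`.
Here `k : Fin n` encodes the level `k+1`, and `w i j ∈ V_{i+1}`. -/
theorem stmt9 (V : Type*) [AddCommGroup V] [Module ℝ[X] V] [Module.Finite ℝ[X] V]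
    (p : ℝ[X]) (hm : p.Monic) (hirr : Irreducible p) (n : ℕ)
    (hann : ∀ v : V, (p ^ n) • v = 0)
    (m : Fin n → ℕ) (w : (i : Fin n) → Fin (m i) → V)
    (hw : ∀ (i : Fin n) (j : Fin (m i)), (p ^ ((i : ℕ) + 1)) • w i j = 0)
    (hindep : ∀ (k : Fin n) (f : ((i : Fin n) × Fin (m i)) → ℝ[X]),
      (p ^ (k : ℕ)) • (∑ x : (i : Fin n) × Fin (m i),
          if (k : ℕ) ≤ (x.1 : ℕ) then
            f x • ((p ^ ((x.1 : ℕ) - (k : ℕ))) • w x.1 x.2) else 0) = 0 →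
      ∀ x : (i : Fin n) × Fin (m i), (k : ℕ) ≤ (x.1 : ℕ) → p ∣ f x)
    (hspan : ∀ (k : Fin n) (v : V), (p ^ ((k : ℕ) + 1)) • v = 0 →
      ∃ f : ((i : Fin n) × Fin (m i)) → ℝ[X],
        (p ^ (k : ℕ)) • (v - ∑ x : (i : Fin n) × Fin (m i),
          if (k : ℕ) ≤ (x.1 : ℕ) then
            f x • ((p ^ ((x.1 : ℕ) - (k : ℕ))) • w x.1 x.2) else 0) = 0) :
    DirectSum.IsInternal (fun x : (i : Fin n) × Fin (m i) =>
      Submodule.span ℝ[X] ({w x.1 x.2} : Set V)) :=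
  stmt9_general V p n hann m w hw hindep hspan
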